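/- Let {L_t}_{t≥0} be a family of functions in L²(ℝ^d) whose closure is compact in L². Then for every δ > 0 there exists A > 0 such that for all t_0 ≥ 0 and l_0 > 0: if ∫_{|x| ≤ l_0} |L_{t_0}(x)|² dx ≥ δ, then ∫_{|x| ≥ A·l_0} |L_{t_0}(x)|² dx ≤ δ. -/

import Mathlib

/-!
Compactness in `L²` makes the mass `∫ ‖f‖²` uniformly small both near the origin and near
infinity: on a compact set the masses over a decreasing sequence of sets are continuous functions
of `f` decreasing to `0`, so Dini's theorem applies. Hence there are `r > 0` such that no function
of the family carries mass `δ` within radius `r`, and `R` such that each carries mass `< δ` beyond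
radius `R`. Then `A = max R 1 / r` works: mass `δ` within radius `l` forces `r < l`, so `R ≤ A * l`.
-/

open MeasureTheory Filter Topology

namespace MeasureTheory.Lp

variable {α E : Type*} [MeasurableSpace α] {μ : Measure α} [NormedAddCommGroup E]

theorem integrable_norm_sq (f : Lp E 2 μ) : Integrable (fun x => ‖f x‖ ^ 2) μ :=
  (Lp.memLp f).integrable_norm_pow two_ne_zero

theorem integral_norm_sq_eq_norm_sq (f : Lp E 2 μ) : ∫ x, ‖f x‖ ^ 2 ∂μ = ‖f‖ ^ 2 := by
  rw [Lp.norm_def, (Lp.memLp f).eLpNorm_eq_integral_rpow_norm two_ne_zero ENNReal.ofNat_ne_top,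
    ENNReal.toReal_ofReal (by positivity)]
  simp only [ENNReal.toReal_ofNat, Real.rpow_two]
  rw [← Real.rpow_natCast, ← Real.rpow_mul (integral_nonneg fun x => by positivity)]
  norm_num

theorem setIntegral_norm_sq_mono_set (f : Lp E 2 μ) {s t : Set α} (hst : s ⊆ t) :
    ∫ x in s, ‖f x‖ ^ 2 ∂μ ≤ ∫ x in t, ‖f x‖ ^ 2 ∂μ :=
  setIntegral_mono_set (integrable_norm_sq f).integrableOn
    (.of_forall fun _ => by positivity) hst.eventuallyLE

variable [NormedSpace ℝ E]

theorem setIntegral_norm_sq_eq_norm_sq (f : Lp E 2 μ) (s : Set α) :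
    ∫ x in s, ‖f x‖ ^ 2 ∂μ = ‖LpToLpRestrictCLM α E ℝ μ 2 s f‖ ^ 2 := by
  rw [← integral_norm_sq_eq_norm_sq]
  refine integral_congr_ae ?_
  filter_upwards [LpToLpRestrictCLM_coeFn ℝ s f] with x hx
  rw [hx]

theorem continuous_setIntegral_norm_sq (s : Set α) :
    Continuous fun f : Lp E 2 μ => ∫ x in s, ‖f x‖ ^ 2 ∂μ := by
  simp_rw [setIntegral_norm_sq_eq_norm_sq]
  fun_prop

end MeasureTheory.Lp

namespace IsCompact

variable {α E : Type*} [MeasurableSpace α] {μ : Measure α} [NormedAddCommGroup E]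
  [NormedSpace ℝ E]

theorem exists_setIntegral_norm_sq_lt {K : Set (Lp E 2 μ)} (hK : IsCompact K)
    {s : ℕ → Set α} (hsm : ∀ n, MeasurableSet (s n)) (hs : Antitone s)
    (hnull : μ (⋂ n, s n) = 0) {η : ℝ} (hη : 0 < η) :
    ∃ N, ∀ f ∈ K, ∫ x in s N, ‖f x‖ ^ 2 ∂μ < η := by
  have htendsto (f : Lp E 2 μ) :
      Tendsto (fun n => ∫ x in s n, ‖f x‖ ^ 2 ∂μ) atTop (𝓝 0) := by
    simpa [Measure.restrict_eq_zero.mpr hnull] using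
      tendsto_setIntegral_of_antitone hsm hs ⟨0, (Lp.integrable_norm_sq f).integrableOn⟩
  have hunif := Antitone.tendstoUniformlyOn_of_forall_tendsto hK
    (fun n => (Lp.continuous_setIntegral_norm_sq (s n)).continuousOn)
    (fun f _ _ _ hmn => Lp.setIntegral_norm_sq_mono_set f (hs hmn)) continuousOn_const
    (fun f _ => htendsto f)
  obtain ⟨N, hN⟩ := (Metric.tendstoUniformlyOn_iff.mp hunif η hη).exists
  exact ⟨N, fun f hf => (le_abs_self _).trans_lt (by simpa [Real.dist_eq] using hN f hf)⟩

variable {V : Type*} [NormedAddCommGroup V] [MeasurableSpace V] [OpensMeasurableSpace V]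
  {ν : Measure V}

theorem exists_small_ball_setIntegral_norm_sq_lt [NullSingletonClass ν] {K : Set (Lp E 2 ν)}
    (hK : IsCompact K) {η : ℝ} (hη : 0 < η) :
    ∃ r > 0, ∀ f ∈ K, ∫ x in {x | ‖x‖ ≤ r}, ‖f x‖ ^ 2 ∂ν < η := by
  have hnull : ν (⋂ n : ℕ, {x : V | ‖x‖ ≤ 1 / ((n : ℝ) + 1)}) = 0 := by
    refine measure_mono_null (fun x hx => ?_) (measure_singleton 0)
    have hx : ∀ n : ℕ, ‖x‖ ≤ 1 / ((n : ℝ) + 1) := Set.mem_iInter.mp hx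
    exact norm_le_zero_iff.mp (ge_of_tendsto' tendsto_one_div_add_atTop_nhds_zero_nat hx)
  obtain ⟨M, hM⟩ := hK.exists_setIntegral_norm_sq_lt
    (fun n => measurableSet_le measurable_norm measurable_const)
    (fun m n hmn x (hx : ‖x‖ ≤ _) => hx.trans (by gcongr)) hnull hη
  exact ⟨_, by positivity, hM⟩

theorem exists_tail_setIntegral_norm_sq_lt {K : Set (Lp E 2 ν)} (hK : IsCompact K) {η : ℝ}
    (hη : 0 < η) : ∃ R : ℝ, ∀ f ∈ K, ∫ x in {x | R ≤ ‖x‖}, ‖f x‖ ^ 2 ∂ν < η := by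
  have hempty : ⋂ n : ℕ, {x : V | (n : ℝ) ≤ ‖x‖} = ∅ :=
    Set.eq_empty_of_forall_notMem fun x hx =>
      let ⟨n, hn⟩ := exists_nat_gt ‖x‖
      (Set.mem_iInter.mp hx n).not_gt hn
  obtain ⟨R, hR⟩ := hK.exists_setIntegral_norm_sq_lt
    (s := fun n : ℕ => {x : V | (n : ℝ) ≤ ‖x‖})
    (fun n => measurableSet_le measurable_const measurable_norm)
    (fun m n hmn x (hx : _ ≤ ‖x‖) => le_trans (by gcongr) hx) (by simp [hempty]) hη
  exact ⟨_, hR⟩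

theorem exists_tail_le_of_le_ball [NullSingletonClass ν] {K : Set (Lp E 2 ν)}
    (hK : IsCompact K) {δ : ℝ} (hδ : 0 < δ) :
    ∃ A > 0, ∀ f ∈ K, ∀ l > 0, δ ≤ ∫ x in {x | ‖x‖ ≤ l}, ‖f x‖ ^ 2 ∂ν →
      ∫ x in {x | A * l ≤ ‖x‖}, ‖f x‖ ^ 2 ∂ν ≤ δ := by
  obtain ⟨r, hr, hball⟩ := hK.exists_small_ball_setIntegral_norm_sq_lt hδ
  obtain ⟨R, htail⟩ := hK.exists_tail_setIntegral_norm_sq_lt hδ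
  refine ⟨max R 1 / r, by positivity, fun f hf l hl hmass => ?_⟩
  have hrl : r < l := by
    by_contra! hlr
    exact (hmass.trans (Lp.setIntegral_norm_sq_mono_set f
      fun x (hx : ‖x‖ ≤ l) => hx.trans hlr)).not_gt (hball f hf)
  have hRl : R ≤ max R 1 / r * l := by
    calc R ≤ max R 1 := le_max_left _ _
      _ = max R 1 / r * r := by field_simp
      _ ≤ max R 1 / r * l := by gcongr
  exact (Lp.setIntegral_norm_sq_mono_set f fun x (hx : _ ≤ ‖x‖) => hRl.trans hx).trans
    (htail f hf).le

end IsCompact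

/-- For a family `{L_t}_{t ≥ 0}` of `L²(ℝᵈ)` functions which is precompact in `L²`:
for every `δ > 0` there is `A > 0` such that for all `t₀ ≥ 0` and `l₀ > 0`, if the mass
of `L_{t₀}` inside the ball of radius `l₀` is at least `δ`, then the mass outside the
ball of radius `A · l₀` is at most `δ`. -/
theorem stmt_1 (d : ℕ)
    (L : ℝ → Lp ℂ 2 (volume : Measure (EuclideanSpace ℝ (Fin d))))
    (hcompact : IsCompact (closure (L '' Set.Ici 0)))
    (δ : ℝ) (hδ : 0 < δ) :
    ∃ A > 0, ∀ t₀ : ℝ, 0 ≤ t₀ → ∀ l₀ : ℝ, 0 < l₀ →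
      (δ ≤ ∫ x in {x : EuclideanSpace ℝ (Fin d) | ‖x‖ ≤ l₀}, ‖(L t₀ : EuclideanSpace ℝ (Fin d) → ℂ) x‖ ^ 2) →
      (∫ x in {x : EuclideanSpace ℝ (Fin d) | A * l₀ ≤ ‖x‖}, ‖(L t₀ : EuclideanSpace ℝ (Fin d) → ℂ) x‖ ^ 2) ≤ δ := by
  rcases subsingleton_or_nontrivial (EuclideanSpace ℝ (Fin d)) with hV | hV
  · -- the origin is an atom, but the tail region is empty
    refine ⟨1, one_pos, fun t₀ _ l₀ hl₀ _ => ?_⟩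
    have hempty : {x : EuclideanSpace ℝ (Fin d) | l₀ ≤ ‖x‖} = ∅ :=
      Set.eq_empty_of_forall_notMem fun x (hx : l₀ ≤ ‖x‖) => by
        rw [Subsingleton.elim x 0, norm_zero] at hx
        linarith
    rw [one_mul, hempty, Measure.restrict_empty, integral_zero_measure]
    exact hδ.le
  · obtain ⟨A, hA, hK⟩ := hcompact.exists_tail_le_of_le_ball hδ
    exact ⟨A, hA, fun t₀ ht₀ l₀ hl₀ =>
      hK (L t₀) (subset_closure ⟨t₀, ht₀, rfl⟩) l₀ hl₀⟩
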